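/- Chain of imbedded Pareto sets under additional information: let X be a set, K : X → ℝ^m a vector criterion, and suppose for each x ∈ X and j that a_j(x) ≤ a'_j(x) ≤ K_j(x) ≤ b'_j(x) ≤ b_j(x) (the true point estimates lie in the narrowed intervals, which lie in the original intervals). Then X_Π^K ⊆ X_Π^{L(a)} ⊆ X_Π^L, where X_Π^K is the set of alternatives not strictly Pareto-dominated w.r.t. K, X_Π^{L(a)} is the set of alternatives not interval-dominated w.r.t. the narrowed intervals [a'_j, b'_j], and X_Π^L is the set of alternatives not interval-dominated w.r.t. the original intervals [a_j, b_j]. -/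
import Mathlib

theorem imbedded_pareto_sets_chain
    {X : Type*} {m : ℕ} (K : Fin m → X → ℝ) (a b a' b' : X → Fin m → ℝ)
    (h : ∀ x j, a x j ≤ a' x j ∧ a' x j ≤ K j x ∧ K j x ≤ b' x j ∧ b' x j ≤ b x j) :
    ({x : X | ¬ ∃ y : X, (∀ j, K j y ≥ K j x) ∧ (∃ j, K j y > K j x)} ⊆
     {x : X | ¬ ∃ y : X, (∀ j, a' y j ≥ b' x j) ∧ (∃ j, a' y j > b' x j)}) ∧
    ({x : X | ¬ ∃ y : X, (∀ j, a' y j ≥ b' x j) ∧ (∃ j, a' y j > b' x j)} ⊆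
     {x : X | ¬ ∃ y : X, (∀ j, a y j ≥ b x j) ∧ (∃ j, a y j > b x j)}) := by
  constructor
  · intro x hx ⟨y, hall, j, hj⟩
    exact hx ⟨y, fun i => le_trans (le_trans (h x i).2.2.1 (hall i)) (h y i).2.1,
      j, lt_of_le_of_lt (h x j).2.2.1 (lt_of_lt_of_le hj (h y j).2.1)⟩
  · intro x hx ⟨y, hall, j, hj⟩
    exact hx ⟨y, fun i => le_trans (le_trans (h x i).2.2.2 (hall i)) (h y i).1,
      j, lt_of_le_of_lt (h x j).2.2.2 (lt_of_lt_of_le hj (h y j).1)⟩
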